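/- arXiv:1009.5661 — 2 statements merged into one kernel-verified Lean document; each statement's English description precedes it below -/
import Mathlib

section
/- For the curve f₀(t) = Ad_{L(t)}(a·e₀ + b·e₁ - c·e₂) with a, b, c constants and L(t) = [[1,0],[t,1]], the derivative satisfies f₀′(t) = Ad_{L(t)}(c·(e₀+e₁) + (b-a)·e₂); consequently f₀ is a null curve (⟨f₀′, f₀′⟩ = 0 for all t) if and only if a = b. -/
open Matrix

noncomputable section

def e0 : Matrix (Fin 2) (Fin 2) ℝ := !![0, -1; 1, 0]
def e1 : Matrix (Fin 2) (Fin 2) ℝ := !![0, 1; 1, 0]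
def e2 : Matrix (Fin 2) (Fin 2) ℝ := !![-1, 0; 0, 1]

/-- Minkowski inner product on sl(2,ℝ). -/
def ip (X Y : Matrix (Fin 2) (Fin 2) ℝ) : ℝ := (1 / 2) * (X * Y).trace

/-- The rotation matrix about the null axis `e0 + e1`. -/
def L (t : ℝ) : Matrix (Fin 2) (Fin 2) ℝ := !![1, 0; t, 1]

/-- Entrywise derivative of a matrix-valued curve. -/
def matDeriv (F : ℝ → Matrix (Fin 2) (Fin 2) ℝ) (t : ℝ) : Matrix (Fin 2) (Fin 2) ℝ :=
  Matrix.of fun i j => deriv (fun s => F s i j) t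

/-! `L t = 1 + t • E` with `E = nilL` square-zero, so `Ad_{L t} X = X + t [E, X] - t² E X E` is
quadratic in `t`. Its derivative `[E, X] - 2t E X E` is again `Ad_{L t} [E, X]`, because
`[E, [E, X]] = -2 E X E` and `E [E, X] E = 0`. For `X = a e0 + b e1 - c e2` the bracket is
`c (e0 + e1) + (b - a) e2`; as the trace form is `Ad`-invariant, `e0 + e1` is null and orthogonal
to `e2`, and `⟨e2, e2⟩ = 1`, the curve has `⟨f₀', f₀'⟩ = (b - a)²`. -/

/-- `(e0 + e1) / 2`, the generator of the null rotations `L t`. -/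
def nilL : Matrix (Fin 2) (Fin 2) ℝ := !![0, 0; 1, 0]

section SquareZero

variable {R A : Type*} [CommRing R] [Ring A]

lemma one_add_smul_mul_mul_one_sub_smul [Algebra R A] (E X : A) (s : R) :
    (1 + s • E) * X * (1 - s • E) = X + s • (E * X - X * E) - s ^ 2 • (E * X * E) := by
  simp only [add_mul, mul_sub, one_mul, mul_one, smul_mul_assoc, mul_smul_comm, smul_sub, mul_assoc]
  module

variable {E : A}

lemma commutator_commutator_of_mul_self_eq_zero [Algebra R A] (hE : E * E = 0) (X : A) :
    E * (E * X - X * E) - (E * X - X * E) * E = (-2 : R) • (E * X * E) := by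
  have hEEX : E * (E * X) = 0 := by rw [← mul_assoc, hE, zero_mul]
  have hXEE : X * E * E = 0 := by rw [mul_assoc, hE, mul_zero]
  rw [mul_sub, sub_mul, hEEX, hXEE, ← mul_assoc]
  module

lemma mul_commutator_mul_of_mul_self_eq_zero (hE : E * E = 0) (X : A) :
    E * (E * X - X * E) * E = 0 := by
  rw [mul_sub, sub_mul, ← mul_assoc, hE, zero_mul, zero_mul, mul_assoc, mul_assoc, hE, mul_zero,
    mul_zero, sub_zero]

end SquareZero

lemma L_eq_one_add_smul (t : ℝ) : L t = 1 + t • nilL := by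
  ext i j
  fin_cases i <;> fin_cases j <;> simp [L, nilL]

lemma nilL_mul_self : nilL * nilL = 0 := by
  ext i j
  fin_cases i <;> fin_cases j <;> simp [nilL, Matrix.mul_apply]

lemma inv_L (t : ℝ) : (L t)⁻¹ = 1 - t • nilL := by
  refine Matrix.inv_eq_right_inv ?_
  rw [L_eq_one_add_smul, add_mul, one_mul, mul_sub, mul_one, smul_mul_smul_comm, nilL_mul_self]
  simp

lemma isUnit_L (t : ℝ) : IsUnit (L t) := by
  rw [Matrix.isUnit_iff_isUnit_det]
  simp [L, Matrix.det_fin_two]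

lemma L_mul_mul_inv_L (X : Matrix (Fin 2) (Fin 2) ℝ) (t : ℝ) :
    L t * X * (L t)⁻¹ = X + t • (nilL * X - X * nilL) - t ^ 2 • (nilL * X * nilL) := by
  rw [inv_L, L_eq_one_add_smul, one_add_smul_mul_mul_one_sub_smul]

lemma matDeriv_add_smul_sub_sq_smul (X Y Z : Matrix (Fin 2) (Fin 2) ℝ) (t : ℝ) :
    matDeriv (fun s => X + s • Y - s ^ 2 • Z) t = Y - (2 * t) • Z := by
  ext i j
  show deriv (fun s => X i j + s * Y i j - s ^ 2 * Z i j) t = Y i j - 2 * t * Z i j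
  have h := (((hasDerivAt_id' t).mul_const (Y i j)).const_add (X i j)).sub
    ((hasDerivAt_pow 2 t).mul_const (Z i j))
  exact h.deriv.trans (by norm_num)

lemma matDeriv_L_conj (X : Matrix (Fin 2) (Fin 2) ℝ) (t : ℝ) :
    matDeriv (fun s => L s * X * (L s)⁻¹) t = L t * (nilL * X - X * nilL) * (L t)⁻¹ := by
  simp_rw [L_mul_mul_inv_L]
  rw [matDeriv_add_smul_sub_sq_smul,
    commutator_commutator_of_mul_self_eq_zero (R := ℝ) nilL_mul_self,
    mul_commutator_mul_of_mul_self_eq_zero nilL_mul_self]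
  module

lemma ip_conj {P : Matrix (Fin 2) (Fin 2) ℝ} (hP : IsUnit P) (X Y : Matrix (Fin 2) (Fin 2) ℝ) :
    ip (P * X * P⁻¹) (P * Y * P⁻¹) = ip X Y := by
  have hPP : P⁻¹ * P = 1 := Matrix.nonsing_inv_mul P ((Matrix.isUnit_iff_isUnit_det P).mp hP)
  have : P * X * P⁻¹ * (P * Y * P⁻¹) = P * (X * Y) * P⁻¹ := by
    simp only [Matrix.mul_assoc]
    rw [← Matrix.mul_assoc P⁻¹ P, hPP, Matrix.one_mul]
  rw [ip, ip, this, Matrix.trace_conj hP]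

lemma nilL_commutator (a b c : ℝ) :
    nilL * (a • e0 + b • e1 - c • e2) - (a • e0 + b • e1 - c • e2) * nilL
      = c • (e0 + e1) + (b - a) • e2 := by
  ext i j
  fin_cases i <;> fin_cases j <;> simp [nilL, e0, e1, e2] <;> ring

lemma ip_smul_null_add_smul_e2_self (c d : ℝ) :
    ip (c • (e0 + e1) + d • e2) (c • (e0 + e1) + d • e2) = d ^ 2 := by
  simp [ip, e0, e1, e2, Matrix.trace_fin_two]
  ring

theorem stmt_5 (a b c : ℝ)
    (f₀ : ℝ → Matrix (Fin 2) (Fin 2) ℝ)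
    (hf₀ : ∀ t, f₀ t = L t * (a • e0 + b • e1 - c • e2) * (L t)⁻¹) :
    (∀ t, matDeriv f₀ t = L t * (c • (e0 + e1) + (b - a) • e2) * (L t)⁻¹) ∧
    ((∀ t, ip (matDeriv f₀ t) (matDeriv f₀ t) = 0) ↔ a = b) := by
  obtain rfl : f₀ = fun s => L s * (a • e0 + b • e1 - c • e2) * (L s)⁻¹ := funext hf₀
  have hderiv : ∀ t, matDeriv (fun s => L s * (a • e0 + b • e1 - c • e2) * (L s)⁻¹) t
      = L t * (c • (e0 + e1) + (b - a) • e2) * (L t)⁻¹ := fun t => by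
    rw [matDeriv_L_conj, nilL_commutator]
  refine ⟨hderiv, ?_⟩
  simp only [hderiv, ip_conj (isUnit_L _), ip_smul_null_add_smul_e2_self, forall_const]
  rw [sq_eq_zero_iff, sub_eq_zero, eq_comm]
end
end

section
/- Suppose f: D → ℝ³ is a smooth map with null coordinates (x,y) and F: D → SL(2,ℝ) satisfies f_x = (ε₁/2)e^{ω/2}Ad_F(e₀+e₁), f_y = (ε₂/2)e^{ω/2}Ad_F(−e₀+e₁), N = Ad_F(e₂), with ε₁,ε₂ ∈ {±1}. Then writing F⁻¹dF = U dx + V dy, the matrix U has the form (1/4)[[−ω_x, −4ε₁Qe^{−ω/2}],[2ε₁He^{ω/2}, ω_x]] where Q = ⟨f_xx, N⟩ and H = 2ε₁ε₂e^{−ω}⟨f_xy, N⟩, with ⟨·,·⟩ the Minkowski inner product on sl(2,ℝ). -/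
open Matrix Real

noncomputable section

/-- Entrywise partial derivative in the first variable. -/
def pdx (F : ℝ → ℝ → Matrix (Fin 2) (Fin 2) ℝ) : ℝ → ℝ → Matrix (Fin 2) (Fin 2) ℝ :=
  fun x y => Matrix.of fun i j => deriv (fun s => F s y i j) x

/-- Entrywise partial derivative in the second variable. -/
def pdy (F : ℝ → ℝ → Matrix (Fin 2) (Fin 2) ℝ) : ℝ → ℝ → Matrix (Fin 2) (Fin 2) ℝ :=
  fun x y => Matrix.of fun i j => deriv (fun s => F x s i j) y

/-- Partial derivative in the first variable of a scalar function. -/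
def sdx (g : ℝ → ℝ → ℝ) (x y : ℝ) : ℝ := deriv (fun s => g s y) x

lemma pd1_eq {g : ℝ × ℝ → ℝ} (hg : ContDiff ℝ (⊤ : ℕ∞) g) (a b : ℝ) :
    deriv (fun t => g (t, b)) a = fderiv ℝ g (a, b) (1, 0) := by
  have hd : HasDerivAt (fun t : ℝ => (t, b)) ((1 : ℝ), (0 : ℝ)) a :=
    HasDerivAt.prodMk (hasDerivAt_id a) (hasDerivAt_const a b)
  have hf : HasFDerivAt g (fderiv ℝ g (a, b)) (a, b) :=
    (hg.differentiable (by simp) (a, b)).hasFDerivAt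
  exact (hf.comp_hasDerivAt a hd).deriv

lemma pd2_eq {g : ℝ × ℝ → ℝ} (hg : ContDiff ℝ (⊤ : ℕ∞) g) (a b : ℝ) :
    deriv (fun s => g (a, s)) b = fderiv ℝ g (a, b) (0, 1) := by
  have hd : HasDerivAt (fun s : ℝ => (a, s)) ((0 : ℝ), (1 : ℝ)) b :=
    HasDerivAt.prodMk (hasDerivAt_const b a) (hasDerivAt_id b)
  have hf : HasFDerivAt g (fderiv ℝ g (a, b)) (a, b) :=
    (hg.differentiable (by simp) (a, b)).hasFDerivAt
  exact (hf.comp_hasDerivAt b hd).deriv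

lemma pdmix {g : ℝ × ℝ → ℝ} (hg : ContDiff ℝ (⊤ : ℕ∞) g) (x y : ℝ) (v : ℝ × ℝ) :
    deriv (fun s => fderiv ℝ g (x, s) v) y = fderiv ℝ (fderiv ℝ g) (x, y) (0, 1) v := by
  have hg' : ContDiff ℝ (↑(⊤:ℕ∞)) g := hg.of_le (by simp)
  have hΦ : ContDiff ℝ (↑(⊤:ℕ∞)) (fderiv ℝ g) := (contDiff_infty_iff_fderiv.1 hg').2
  have hd : HasDerivAt (fun s : ℝ => (x, s)) ((0 : ℝ), (1 : ℝ)) y :=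
    HasDerivAt.prodMk (hasDerivAt_const y x) (hasDerivAt_id y)
  have hf : HasFDerivAt (fderiv ℝ g) (fderiv ℝ (fderiv ℝ g) (x, y)) (x, y) :=
    (hΦ.differentiable (by simp) (x, y)).hasFDerivAt
  have h1 : HasDerivAt (fun s => fderiv ℝ g (x, s)) (fderiv ℝ (fderiv ℝ g) (x, y) (0, 1)) y :=
    hf.comp_hasDerivAt y hd
  have h2 := h1.clm_apply (hasDerivAt_const y v)
  simpa using h2.deriv

lemma pdmix' {g : ℝ × ℝ → ℝ} (hg : ContDiff ℝ (⊤ : ℕ∞) g) (x y : ℝ) (v : ℝ × ℝ) :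
    deriv (fun t => fderiv ℝ g (t, y) v) x = fderiv ℝ (fderiv ℝ g) (x, y) (1, 0) v := by
  have hg' : ContDiff ℝ (↑(⊤:ℕ∞)) g := hg.of_le (by simp)
  have hΦ : ContDiff ℝ (↑(⊤:ℕ∞)) (fderiv ℝ g) := (contDiff_infty_iff_fderiv.1 hg').2
  have hd : HasDerivAt (fun t : ℝ => (t, y)) ((1 : ℝ), (0 : ℝ)) x :=
    HasDerivAt.prodMk (hasDerivAt_id x) (hasDerivAt_const x y)
  have hf : HasFDerivAt (fderiv ℝ g) (fderiv ℝ (fderiv ℝ g) (x, y)) (x, y) :=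
    (hΦ.differentiable (by simp) (x, y)).hasFDerivAt
  have h1 : HasDerivAt (fun t => fderiv ℝ g (t, y)) (fderiv ℝ (fderiv ℝ g) (x, y) (1, 0)) x :=
    hf.comp_hasDerivAt x hd
  have h2 := h1.clm_apply (hasDerivAt_const x v)
  simpa using h2.deriv

lemma clairaut {g : ℝ × ℝ → ℝ} (hg : ContDiff ℝ (⊤ : ℕ∞) g) (x y : ℝ) :
    deriv (fun s => deriv (fun t => g (t, s)) x) y
      = deriv (fun t => deriv (fun s => g (t, s)) y) x := by
  have h2 : ContDiffAt ℝ 2 g (x, y) := hg.contDiffAt.of_le (WithTop.coe_le_coe.2 le_top)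
  have hsymm := h2.isSymmSndFDerivAt (by norm_num)
  calc deriv (fun s => deriv (fun t => g (t, s)) x) y
      = deriv (fun s => fderiv ℝ g (x, s) (1, 0)) y := by
        congr 1; funext s; exact pd1_eq hg x s
    _ = fderiv ℝ (fderiv ℝ g) (x, y) (0, 1) (1, 0) := pdmix hg x y _
    _ = fderiv ℝ (fderiv ℝ g) (x, y) (1, 0) (0, 1) := hsymm _ _
    _ = deriv (fun t => deriv (fun s => g (t, s)) y) x := by
        rw [show (fun t => deriv (fun s => g (t, s)) y) = fun t => fderiv ℝ g (t, y) (0, 1) by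
          funext t; exact pd2_eq hg t y]
        exact (pdmix' hg x y _).symm

lemma hderiv_pdx {G : ℝ → ℝ → Matrix (Fin 2) (Fin 2) ℝ}
    (h : ∀ i j, ContDiff ℝ (⊤ : ℕ∞) fun p : ℝ × ℝ => G p.1 p.2 i j) (i j : Fin 2) (x y : ℝ) :
    HasDerivAt (fun s => G s y i j) (pdx G x y i j) x := by
  have hdiff : DifferentiableAt ℝ (fun s => G s y i j) x := by
    have h1 : DifferentiableAt ℝ (fun p : ℝ × ℝ => G p.1 p.2 i j) (x, y) :=
      ((h i j).differentiable (by simp)).differentiableAt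
    have h2 : DifferentiableAt ℝ (fun s : ℝ => (s, y)) x :=
      differentiableAt_fun_id.prodMk (differentiableAt_const y)
    exact h1.comp x h2
  simpa [pdx] using hdiff.hasDerivAt

lemma hderiv_sdx {g : ℝ → ℝ → ℝ}
    (h : ContDiff ℝ (⊤ : ℕ∞) fun p : ℝ × ℝ => g p.1 p.2) (x y : ℝ) :
    HasDerivAt (fun s => g s y) (sdx g x y) x := by
  have hdiff : DifferentiableAt ℝ (fun s => g s y) x := by
    have h1 : DifferentiableAt ℝ (fun p : ℝ × ℝ => g p.1 p.2) (x, y) :=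
      (h.differentiable (by simp)).differentiableAt
    have h2 : DifferentiableAt ℝ (fun s : ℝ => (s, y)) x :=
      differentiableAt_fun_id.prodMk (differentiableAt_const y)
    exact h1.comp x h2
  simpa [sdx] using hdiff.hasDerivAt

lemma deriv_formula (c u1 v1 u2 v2 : ℝ → ℝ) {t c' u1' v1' u2' v2' : ℝ}
    (hc : HasDerivAt c c' t) (h1 : HasDerivAt u1 u1' t) (h1' : HasDerivAt v1 v1' t)
    (h2 : HasDerivAt u2 u2' t) (h2' : HasDerivAt v2 v2' t) :
    deriv (fun s => c s * (u1 s * v1 s + u2 s * v2 s)) t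
      = c' * (u1 t * v1 t + u2 t * v2 t)
        + c t * (u1' * v1 t + u1 t * v1' + (u2' * v2 t + u2 t * v2')) := by
  exact (hc.mul ((h1.mul h1').add (h2.mul h2'))).deriv

lemma pdx_key (k p q : ℝ) (G : ℝ → ℝ → Matrix (Fin 2) (Fin 2) ℝ) (w : ℝ → ℝ → ℝ)
    (hG : ∀ i j, ContDiff ℝ (⊤ : ℕ∞) fun pt : ℝ × ℝ => G pt.1 pt.2 i j)
    (hw : ContDiff ℝ (⊤ : ℕ∞) fun pt : ℝ × ℝ => w pt.1 pt.2) (x y : ℝ) :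
    pdx (fun a b => (k * exp (w a b / 2)) • (G a b * !![0, p; q, 0] * adjugate (G a b))) x y
      = (k * exp (w x y / 2) * (sdx w x y / 2)) • (G x y * !![0, p; q, 0] * adjugate (G x y))
        + (k * exp (w x y / 2)) •
            (pdx G x y * !![0, p; q, 0] * adjugate (G x y)
              + G x y * !![0, p; q, 0] * adjugate (pdx G x y)) := by
  have hc : HasDerivAt (fun s => k * exp (w s y / 2))
      (k * (exp (w x y / 2) * (sdx w x y / 2))) x :=
    (((hderiv_sdx hw x y).div_const 2).exp).const_mul k
  ext i j
  fin_cases i <;> fin_cases j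
  · show deriv (fun s => ((k * exp (w s y / 2)) • (G s y * !![0, p; q, 0] * adjugate (G s y))) 0 0) x
        = ((k * exp (w x y / 2) * (sdx w x y / 2)) • (G x y * !![0, p; q, 0] * adjugate (G x y))
            + (k * exp (w x y / 2)) •
                (pdx G x y * !![0, p; q, 0] * adjugate (G x y)
                  + G x y * !![0, p; q, 0] * adjugate (pdx G x y))) 0 0
    have e : (fun s => ((k * exp (w s y / 2)) • (G s y * !![0, p; q, 0] * adjugate (G s y))) 0 0)
        = fun s => (k * exp (w s y / 2)) * ((fun s => q * G s y 0 1) s * (fun s => G s y 1 1) s + (fun s => p * G s y 0 0) s * (fun s => -(G s y 1 0)) s) := by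
      funext s
      simp only [Matrix.smul_apply, Matrix.add_apply, Matrix.mul_apply, Fin.sum_univ_two,
      Matrix.adjugate_fin_two, Matrix.of_apply, Matrix.cons_val', Matrix.cons_val_zero,
      Matrix.cons_val_one, Matrix.head_cons, Matrix.head_fin_const, Matrix.empty_val',
      Matrix.cons_val_fin_one, smul_eq_mul, pdx]
      ring
    rw [e, deriv_formula _ _ _ _ _ hc ((hderiv_pdx hG 0 1 x y).const_mul q) (hderiv_pdx hG 1 1 x y) ((hderiv_pdx hG 0 0 x y).const_mul p) (HasDerivAt.fun_neg (hderiv_pdx hG 1 0 x y))]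
    simp only [Matrix.smul_apply, Matrix.add_apply, Matrix.mul_apply, Fin.sum_univ_two,
      Matrix.adjugate_fin_two, Matrix.of_apply, Matrix.cons_val', Matrix.cons_val_zero,
      Matrix.cons_val_one, Matrix.head_cons, Matrix.head_fin_const, Matrix.empty_val',
      Matrix.cons_val_fin_one, smul_eq_mul, pdx]
    ring
  · show deriv (fun s => ((k * exp (w s y / 2)) • (G s y * !![0, p; q, 0] * adjugate (G s y))) 0 1) x
        = ((k * exp (w x y / 2) * (sdx w x y / 2)) • (G x y * !![0, p; q, 0] * adjugate (G x y))
            + (k * exp (w x y / 2)) •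
                (pdx G x y * !![0, p; q, 0] * adjugate (G x y)
                  + G x y * !![0, p; q, 0] * adjugate (pdx G x y))) 0 1
    have e : (fun s => ((k * exp (w s y / 2)) • (G s y * !![0, p; q, 0] * adjugate (G s y))) 0 1)
        = fun s => (k * exp (w s y / 2)) * ((fun s => q * G s y 0 1) s * (fun s => -(G s y 0 1)) s + (fun s => p * G s y 0 0) s * (fun s => G s y 0 0) s) := by
      funext s
      simp only [Matrix.smul_apply, Matrix.add_apply, Matrix.mul_apply, Fin.sum_univ_two,
      Matrix.adjugate_fin_two, Matrix.of_apply, Matrix.cons_val', Matrix.cons_val_zero,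
      Matrix.cons_val_one, Matrix.head_cons, Matrix.head_fin_const, Matrix.empty_val',
      Matrix.cons_val_fin_one, smul_eq_mul, pdx]
      ring
    rw [e, deriv_formula _ _ _ _ _ hc ((hderiv_pdx hG 0 1 x y).const_mul q) (HasDerivAt.fun_neg (hderiv_pdx hG 0 1 x y)) ((hderiv_pdx hG 0 0 x y).const_mul p) (hderiv_pdx hG 0 0 x y)]
    simp only [Matrix.smul_apply, Matrix.add_apply, Matrix.mul_apply, Fin.sum_univ_two,
      Matrix.adjugate_fin_two, Matrix.of_apply, Matrix.cons_val', Matrix.cons_val_zero,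
      Matrix.cons_val_one, Matrix.head_cons, Matrix.head_fin_const, Matrix.empty_val',
      Matrix.cons_val_fin_one, smul_eq_mul, pdx]
    ring
  · show deriv (fun s => ((k * exp (w s y / 2)) • (G s y * !![0, p; q, 0] * adjugate (G s y))) 1 0) x
        = ((k * exp (w x y / 2) * (sdx w x y / 2)) • (G x y * !![0, p; q, 0] * adjugate (G x y))
            + (k * exp (w x y / 2)) •
                (pdx G x y * !![0, p; q, 0] * adjugate (G x y)
                  + G x y * !![0, p; q, 0] * adjugate (pdx G x y))) 1 0
    have e : (fun s => ((k * exp (w s y / 2)) • (G s y * !![0, p; q, 0] * adjugate (G s y))) 1 0)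
        = fun s => (k * exp (w s y / 2)) * ((fun s => q * G s y 1 1) s * (fun s => G s y 1 1) s + (fun s => p * G s y 1 0) s * (fun s => -(G s y 1 0)) s) := by
      funext s
      simp only [Matrix.smul_apply, Matrix.add_apply, Matrix.mul_apply, Fin.sum_univ_two,
      Matrix.adjugate_fin_two, Matrix.of_apply, Matrix.cons_val', Matrix.cons_val_zero,
      Matrix.cons_val_one, Matrix.head_cons, Matrix.head_fin_const, Matrix.empty_val',
      Matrix.cons_val_fin_one, smul_eq_mul, pdx]
      ring
    rw [e, deriv_formula _ _ _ _ _ hc ((hderiv_pdx hG 1 1 x y).const_mul q) (hderiv_pdx hG 1 1 x y) ((hderiv_pdx hG 1 0 x y).const_mul p) (HasDerivAt.fun_neg (hderiv_pdx hG 1 0 x y))]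
    simp only [Matrix.smul_apply, Matrix.add_apply, Matrix.mul_apply, Fin.sum_univ_two,
      Matrix.adjugate_fin_two, Matrix.of_apply, Matrix.cons_val', Matrix.cons_val_zero,
      Matrix.cons_val_one, Matrix.head_cons, Matrix.head_fin_const, Matrix.empty_val',
      Matrix.cons_val_fin_one, smul_eq_mul, pdx]
    ring
  · show deriv (fun s => ((k * exp (w s y / 2)) • (G s y * !![0, p; q, 0] * adjugate (G s y))) 1 1) x
        = ((k * exp (w x y / 2) * (sdx w x y / 2)) • (G x y * !![0, p; q, 0] * adjugate (G x y))
            + (k * exp (w x y / 2)) •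
                (pdx G x y * !![0, p; q, 0] * adjugate (G x y)
                  + G x y * !![0, p; q, 0] * adjugate (pdx G x y))) 1 1
    have e : (fun s => ((k * exp (w s y / 2)) • (G s y * !![0, p; q, 0] * adjugate (G s y))) 1 1)
        = fun s => (k * exp (w s y / 2)) * ((fun s => q * G s y 1 1) s * (fun s => -(G s y 0 1)) s + (fun s => p * G s y 1 0) s * (fun s => G s y 0 0) s) := by
      funext s
      simp only [Matrix.smul_apply, Matrix.add_apply, Matrix.mul_apply, Fin.sum_univ_two,
      Matrix.adjugate_fin_two, Matrix.of_apply, Matrix.cons_val', Matrix.cons_val_zero,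
      Matrix.cons_val_one, Matrix.head_cons, Matrix.head_fin_const, Matrix.empty_val',
      Matrix.cons_val_fin_one, smul_eq_mul, pdx]
      ring
    rw [e, deriv_formula _ _ _ _ _ hc ((hderiv_pdx hG 1 1 x y).const_mul q) (HasDerivAt.fun_neg (hderiv_pdx hG 0 1 x y)) ((hderiv_pdx hG 1 0 x y).const_mul p) (hderiv_pdx hG 0 0 x y)]
    simp only [Matrix.smul_apply, Matrix.add_apply, Matrix.mul_apply, Fin.sum_univ_two,
      Matrix.adjugate_fin_two, Matrix.of_apply, Matrix.cons_val', Matrix.cons_val_zero,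
      Matrix.cons_val_one, Matrix.head_cons, Matrix.head_fin_const, Matrix.empty_val',
      Matrix.cons_val_fin_one, smul_eq_mul, pdx]
    ring

theorem stmt_13 (f F N : ℝ → ℝ → Matrix (Fin 2) (Fin 2) ℝ) (ω : ℝ → ℝ → ℝ)
    (ε₁ ε₂ : ℝ) (hε₁ : ε₁ = 1 ∨ ε₁ = -1) (hε₂ : ε₂ = 1 ∨ ε₂ = -1)
    (hfs : ∀ i j, ContDiff ℝ (⊤ : ℕ∞) fun p : ℝ × ℝ => f p.1 p.2 i j)
    (hFs : ∀ i j, ContDiff ℝ (⊤ : ℕ∞) fun p : ℝ × ℝ => F p.1 p.2 i j)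
    (hωs : ContDiff ℝ (⊤ : ℕ∞) fun p : ℝ × ℝ => ω p.1 p.2)
    (hdet : ∀ x y, (F x y).det = 1)
    (hfx : ∀ x y, pdx f x y =
      (ε₁ / 2 * exp (ω x y / 2)) • (F x y * (e0 + e1) * (F x y)⁻¹))
    (hfy : ∀ x y, pdy f x y =
      (ε₂ / 2 * exp (ω x y / 2)) • (F x y * (-e0 + e1) * (F x y)⁻¹))
    (hN : ∀ x y, N x y = F x y * e2 * (F x y)⁻¹) :
    ∀ x y,
      -- with `Q = ⟨f_xx, N⟩` and `H = 2ε₁ε₂ e^{-ω} ⟨f_xy, N⟩`: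
      (F x y)⁻¹ * pdx F x y = (1 / 4 : ℝ) •
        !![-(sdx ω x y),
           -4 * ε₁ * ip (pdx (pdx f) x y) (N x y) * exp (-(ω x y) / 2);
           2 * ε₁ * (2 * ε₁ * ε₂ * exp (-(ω x y)) * ip (pdy (pdx f) x y) (N x y)) *
             exp (ω x y / 2),
           sdx ω x y] := by
  intro x y
  have hInv : ∀ a b : ℝ, (F a b)⁻¹ = adjugate (F a b) := by
    intro a b
    rw [Matrix.inv_def, hdet a b]
    simp
  have hE : e0 + e1 = !![(0:ℝ), 0; 2, 0] := by
    ext i j; fin_cases i <;> fin_cases j <;> norm_num [e0, e1]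
  have hEb : -e0 + e1 = !![(0:ℝ), 2; 0, 0] := by
    ext i j; fin_cases i <;> fin_cases j <;> norm_num [e0, e1]
  have hfx' : pdx f = fun a b => (ε₁ / 2 * exp (ω a b / 2)) •
      (F a b * !![(0:ℝ), 0; 2, 0] * adjugate (F a b)) := by
    funext a b; rw [hfx a b, hInv a b, hE]
  have hfy' : pdy f = fun a b => (ε₂ / 2 * exp (ω a b / 2)) •
      (F a b * !![(0:ℝ), 2; 0, 0] * adjugate (F a b)) := by
    funext a b; rw [hfy a b, hInv a b, hEb]
  have hfx'' : (fun a b => pdx f b a) = fun a b => (ε₁ / 2 * exp (ω b a / 2)) •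
      (F b a * !![(0:ℝ), 0; 2, 0] * adjugate (F b a)) := by
    funext a b; rw [hfx b a, hInv b a, hE]
  -- second derivatives
  have hxx_val := pdx_key (ε₁ / 2) 0 2 F ω hFs hωs x y
  rw [← hfx'] at hxx_val
  have hxy_val := pdx_key (ε₂ / 2) 2 0 F ω hFs hωs x y
  rw [← hfy'] at hxy_val
  have hFs' : ∀ i j, ContDiff ℝ (⊤ : ℕ∞) fun pt : ℝ × ℝ => F pt.2 pt.1 i j :=
    fun i j => (hFs i j).comp (contDiff_snd.prodMk contDiff_fst)
  have hωs' : ContDiff ℝ (⊤ : ℕ∞) fun pt : ℝ × ℝ => ω pt.2 pt.1 :=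
    hωs.comp (contDiff_snd.prodMk contDiff_fst)
  have hyx := pdx_key (ε₁ / 2) 0 2 (fun a b => F b a) (fun a b => ω b a) hFs' hωs' y x
  beta_reduce at hyx
  rw [← hfx''] at hyx
  have hswap : pdy (pdx f) x y = pdx (fun a b => pdx f b a) y x := rfl
  rw [← hswap] at hyx
  -- mixed partials commute
  have hmix : pdy (pdx f) x y = pdx (pdy f) x y := by
    ext i j
    show deriv (fun s => deriv (fun t => f t s i j) x) y
        = deriv (fun t => deriv (fun s => f t s i j) y) x
    exact clairaut (hfs i j) x y
  -- determinant facts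
  have h1 : F x y 0 0 * F x y 1 1 - F x y 0 1 * F x y 1 0 = 1 := by
    rw [← Matrix.det_fin_two]; exact hdet x y
  have h2 : deriv (fun s => F s y 0 0) x * F x y 1 1 + F x y 0 0 * deriv (fun s => F s y 1 1) x
      - (deriv (fun s => F s y 0 1) x * F x y 1 0 + F x y 0 1 * deriv (fun s => F s y 1 0) x)
      = 0 := by
    have hD := HasDerivAt.fun_sub (HasDerivAt.fun_mul (hderiv_pdx hFs 0 0 x y) (hderiv_pdx hFs 1 1 x y))
      (HasDerivAt.fun_mul (hderiv_pdx hFs 0 1 x y) (hderiv_pdx hFs 1 0 x y))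
    rw [show (fun s => F s y 0 0 * F s y 1 1 - F s y 0 1 * F s y 1 0) = fun _ => (1:ℝ) from
      funext fun s => by rw [← Matrix.det_fin_two]; exact hdet s y] at hD
    have := hD.unique (hasDerivAt_const x 1)
    simpa [pdx] using this
  -- the key trace equation coming from symmetry of mixed partials
  have hkey : (pdy (pdx f) x y * (F x y * !![(0:ℝ), 0; 2, 0] * adjugate (F x y))).trace
      = (pdx (pdy f) x y * (F x y * !![(0:ℝ), 0; 2, 0] * adjugate (F x y))).trace := by
    rw [hmix]
  rw [hyx, hxy_val] at hkey
  simp only [Matrix.trace_fin_two, Matrix.smul_apply, Matrix.add_apply, Matrix.mul_apply,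
    Fin.sum_univ_two, Matrix.adjugate_fin_two, Matrix.of_apply, Matrix.cons_val',
    Matrix.cons_val_zero, Matrix.cons_val_one, Matrix.head_cons, Matrix.head_fin_const,
    Matrix.empty_val', Matrix.cons_val_fin_one, smul_eq_mul, pdx, Fin.mk_zero, Fin.mk_one] at hkey
  have hexp : exp (ω x y / 2) ≠ 0 := exp_ne_zero _
  have hε₂0 : ε₂ ≠ 0 := by rcases hε₂ with h | h <;> rw [h] <;> norm_num
  have hquot : ε₂ * exp (ω x y / 2) * (sdx ω x y
      + 4 * (F x y 1 1 * deriv (fun s => F s y 0 0) x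
        - F x y 0 1 * deriv (fun s => F s y 1 0) x)) = 0 := by
    linear_combination (-1 : ℝ) * hkey
      - (ε₂ * exp (ω x y / 2) * (sdx ω x y * (1 + (F x y 0 0 * F x y 1 1 - F x y 0 1 * F x y 1 0))
        + 4 * (F x y 1 1 * deriv (fun s => F s y 0 0) x
          - F x y 0 1 * deriv (fun s => F s y 1 0) x))) * h1
  have ha : F x y 1 1 * deriv (fun s => F s y 0 0) x
      - F x y 0 1 * deriv (fun s => F s y 1 0) x = -(sdx ω x y) / 4 := by
    rcases mul_eq_zero.1 hquot with h | h
    · exact absurd h (mul_ne_zero hε₂0 hexp)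
    · linarith
  have hd : F x y 0 0 * deriv (fun s => F s y 1 1) x
      - F x y 1 0 * deriv (fun s => F s y 0 1) x = sdx ω x y / 4 := by
    linear_combination h2 - ha
  -- the Q and H inner products
  have hQ : ip (pdx (pdx f) x y) (N x y) = -ε₁ * exp (ω x y / 2) *
      (F x y 1 1 * deriv (fun s => F s y 0 1) x - F x y 0 1 * deriv (fun s => F s y 1 1) x) := by
    rw [hxx_val, hN x y, hInv x y]
    simp only [ip, e2, Matrix.trace_fin_two, Matrix.smul_apply, Matrix.add_apply, Matrix.mul_apply,
      Fin.sum_univ_two, Matrix.adjugate_fin_two, Matrix.of_apply, Matrix.cons_val',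
      Matrix.cons_val_zero, Matrix.cons_val_one, Matrix.head_cons, Matrix.head_fin_const,
      Matrix.empty_val', Matrix.cons_val_fin_one, smul_eq_mul, pdx, Fin.mk_zero, Fin.mk_one]
    linear_combination (-(ε₁) * exp (ω x y / 2) *
      (F x y 1 1 * deriv (fun s => F s y 0 1) x - F x y 0 1 * deriv (fun s => F s y 1 1) x)) * h1
  have hH : ip (pdy (pdx f) x y) (N x y) = ε₂ * exp (ω x y / 2) *
      (F x y 0 0 * deriv (fun s => F s y 1 0) x - F x y 1 0 * deriv (fun s => F s y 0 0) x) := by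
    rw [hmix, hxy_val, hN x y, hInv x y]
    simp only [ip, e2, Matrix.trace_fin_two, Matrix.smul_apply, Matrix.add_apply, Matrix.mul_apply,
      Fin.sum_univ_two, Matrix.adjugate_fin_two, Matrix.of_apply, Matrix.cons_val',
      Matrix.cons_val_zero, Matrix.cons_val_one, Matrix.head_cons, Matrix.head_fin_const,
      Matrix.empty_val', Matrix.cons_val_fin_one, smul_eq_mul, pdx, Fin.mk_zero, Fin.mk_one]
    linear_combination (ε₂ * exp (ω x y / 2) *
      (F x y 0 0 * deriv (fun s => F s y 1 0) x - F x y 1 0 * deriv (fun s => F s y 0 0) x)) * h1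
  -- assemble
  have hε₁sq : ε₁ * ε₁ = 1 := by rcases hε₁ with h | h <;> rw [h] <;> norm_num
  have hε₂sq : ε₂ * ε₂ = 1 := by rcases hε₂ with h | h <;> rw [h] <;> norm_num
  have hee : exp (-(ω x y) / 2) * exp (ω x y / 2) = 1 := by
    rw [← exp_add, show -(ω x y) / 2 + ω x y / 2 = 0 by ring, exp_zero]
  have hee2 : exp (-(ω x y)) * (exp (ω x y / 2) * exp (ω x y / 2)) = 1 := by
    rw [← exp_add, ← exp_add, show -(ω x y) + (ω x y / 2 + ω x y / 2) = 0 by ring, exp_zero]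
  rw [hInv x y, hQ, hH]
  ext i j
  fin_cases i <;> fin_cases j <;>
    simp only [Matrix.smul_apply, Matrix.add_apply, Matrix.mul_apply, Fin.sum_univ_two,
      Matrix.adjugate_fin_two, Matrix.of_apply, Matrix.cons_val', Matrix.cons_val_zero,
      Matrix.cons_val_one, Matrix.head_cons, Matrix.head_fin_const, Matrix.empty_val',
      Matrix.cons_val_fin_one, smul_eq_mul, pdx, Fin.mk_zero, Fin.mk_one]
  · linear_combination ha
  · linear_combination (-(F x y 1 1 * deriv (fun s => F s y 0 1) x
        - F x y 0 1 * deriv (fun s => F s y 1 1) x)) * hε₁sq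
      + (-(F x y 1 1 * deriv (fun s => F s y 0 1) x
        - F x y 0 1 * deriv (fun s => F s y 1 1) x) * ε₁ * ε₁) * hee
  · linear_combination (-(F x y 0 0 * deriv (fun s => F s y 1 0) x
        - F x y 1 0 * deriv (fun s => F s y 0 0) x)) * hε₁sq
      + (-(F x y 0 0 * deriv (fun s => F s y 1 0) x
        - F x y 1 0 * deriv (fun s => F s y 0 0) x) * ε₁ * ε₁) * hε₂sq
      + (-(F x y 0 0 * deriv (fun s => F s y 1 0) x
        - F x y 1 0 * deriv (fun s => F s y 0 0) x) * ε₁ * ε₁ * ε₂ * ε₂) * hee2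
  · linear_combination hd
end
end
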